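/- Let C₁ < C₂ < ... < C_m (as right-padded ℓ_max-bit integers) be the lexicographically smallest codewords at each occupied depth of a canonical code tree, with lengths ℓ₁ < ℓ₂ < ... < ℓ_m. Then for any bit string X of length ℓ_max that begins with some codeword of the code of length ℓ_i, the predecessor of X among {C₁,...,C_m} (with respect to the right-padded integer order) is exactly C_i. -/

import Mathlib

inductive BTree where
  | leaf : BTree
  | node : BTree → BTree → BTree

namespace BTree

def codewords : BTree → List (List Bool)
  | .leaf => [[]]
  | .node l r => (codewords l).map (List.cons false) ++ (codewords r).map (List.cons true)

def numLeaves : BTree → ℕ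
  | .leaf => 1
  | .node l r => numLeaves l + numLeaves r

/-- Codewords read left to right are strictly increasing lexicographically
with non-decreasing lengths. -/
def Canonical (t : BTree) : Prop :=
  (codewords t).Chain' (fun a b => List.Lex (· < ·) a b) ∧
  (codewords t).Chain' (fun a b => a.length ≤ b.length)

/-- Length of the maximal leading run of 1-bits. -/
def leadOnes (C : List Bool) : ℕ := (C.takeWhile id).length

end BTree

namespace BTree

/-- The value of a codeword as a binary integer (most significant bit first). -/
def val (C : List Bool) : ℕ := C.foldl (fun n b => 2 * n + b.toNat) 0

/-- Maximum codeword length of the tree. -/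
def lmax (t : BTree) : ℕ := ((codewords t).map List.length).foldr max 0

/-- The value of a codeword right-padded with 0s to `L` bits. -/
def padVal (L : ℕ) (C : List Bool) : ℕ := val (C ++ List.replicate (L - C.length) false)

/-- The lexicographically smallest (= leftmost) codeword of length `ℓ`, if any. -/
def first (t : BTree) (ℓ : ℕ) : Option (List Bool) :=
  ((codewords t).filter (fun C => C.length = ℓ)).head?

end BTree

/-!
In a canonical code a codeword precedes every longer one lexicographically, and since the code
is prefix-free the two first differ where the shorter one has a 0 and the longer one a 1. Such
an order survives padding or extending both words to the same length. Hence the leftmost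
codewords of smaller lengths pad to less than `F`, those of larger lengths pad to more than
every extension of `C`, `X` included, and `F` pads to at most `C`, which pads to at most `X`.
-/

namespace BTree

theorem val_append (A B : List Bool) : val (A ++ B) = val A * 2 ^ B.length + val B := by
  suffices h : ∀ n, B.foldl (fun n b => 2 * n + b.toNat) n = n * 2 ^ B.length + val B by
    simp only [val, List.foldl_append]
    exact h _
  induction B with
  | nil => simp [val]
  | cons b B ih =>
    intro n
    simp only [val, List.foldl_cons, List.length_cons] at ih ⊢
    rw [ih, ih (2 * 0 + b.toNat)]
    ring

theorem val_cons (b : Bool) (B : List Bool) : val (b :: B) = b.toNat * 2 ^ B.length + val B := by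
  simpa [val] using val_append [b] B

theorem val_lt_two_pow (B : List Bool) : val B < 2 ^ B.length := by
  induction B with
  | nil => simp [val]
  | cons b B ih =>
    rw [val_cons, List.length_cons, pow_succ]
    have := Bool.toNat_le b
    nlinarith

@[simp]
theorem val_replicate_false (n : ℕ) : val (List.replicate n false) = 0 := by
  induction n with
  | zero => rfl
  | succ n ih => simp [List.replicate_succ, val_cons, ih]

theorem padVal_le_val_append (C R : List Bool) : padVal (C ++ R).length C ≤ val (C ++ R) := by
  simp [padVal, val_append]

/-- `Lex` without the prefix case means `A` and `B` first differ where `A` has `0` and `B` has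
`1`, so this order survives any extensions of equal length. -/
theorem val_append_lt_of_lex {A B u v : List Bool} (h : List.Lex (· < ·) A B) (hp : ¬ A <+: B)
    (hl : (A ++ u).length = (B ++ v).length) : val (A ++ u) < val (B ++ v) := by
  induction h with
  | nil => exact absurd List.nil_prefix hp
  | @cons a A B _ ih =>
    simp only [List.cons_append, List.length_cons, Nat.succ_inj] at hl ⊢
    rw [val_cons, val_cons, hl]
    have := ih (fun h => hp (List.cons_prefix_cons.mpr ⟨rfl, h⟩)) hl
    omega
  | @rel a A b B hab =>
    obtain ⟨rfl, rfl⟩ := Bool.lt_iff.mp hab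
    simp only [List.cons_append, List.length_cons, Nat.succ_inj] at hl ⊢
    rw [val_cons, val_cons, ← hl]
    have := val_lt_two_pow (A ++ u)
    simp only [Bool.toNat_false, Bool.toNat_true]
    omega

theorem eq_of_prefix_of_mem_codewords {t : BTree} {A B : List Bool} (hA : A ∈ codewords t)
    (hB : B ∈ codewords t) (hp : A <+: B) : A = B := by
  induction t generalizing A B with
  | leaf => simp_all [codewords]
  | node l r ihl ihr =>
    simp only [codewords, List.mem_append, List.mem_map] at hA hB
    rcases hA with ⟨A, hA, rfl⟩ | ⟨A, hA, rfl⟩ <;>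
      rcases hB with ⟨B, hB, rfl⟩ | ⟨B, hB, rfl⟩ <;>
      simp only [List.cons_prefix_cons, Bool.false_eq_true, Bool.true_eq_false, false_and,
        true_and, List.cons.injEq] at hp ⊢
    exacts [ihl hA hB hp, ihr hA hB hp]

theorem val_append_lt_of_lex_of_mem_codewords {t : BTree} {A B u v : List Bool}
    (hA : A ∈ codewords t) (hB : B ∈ codewords t) (h : List.Lex (· < ·) A B)
    (hl : (A ++ u).length = (B ++ v).length) : val (A ++ u) < val (B ++ v) :=
  val_append_lt_of_lex h
    (fun hp => List.lt_irrefl B (eq_of_prefix_of_mem_codewords hA hB hp ▸ h)) hl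

theorem length_le_lmax {t : BTree} {C : List Bool} (h : C ∈ codewords t) :
    C.length ≤ lmax t := by
  unfold lmax
  generalize codewords t = cs at h
  induction cs with
  | nil => simp at h
  | cons D Ds ih =>
    rcases List.mem_cons.mp h with rfl | h
    · exact le_max_left _ _
    · exact (ih h).trans (le_max_right _ _)

theorem length_padded_eq_lmax {t : BTree} {A : List Bool} (h : A ∈ codewords t) :
    (A ++ List.replicate (lmax t - A.length) false).length = lmax t := by
  have := length_le_lmax h
  simp only [List.length_append, List.length_replicate]
  omega

theorem mem_codewords_of_first {t : BTree} {ℓ : ℕ} {F : List Bool} (hF : first t ℓ = some F) :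
    F ∈ codewords t ∧ F.length = ℓ := by
  simpa using List.mem_filter.mp (List.mem_of_head? hF)

namespace Canonical

variable {t : BTree} (ht : Canonical t)
include ht

theorem pairwise_lex : (codewords t).Pairwise (fun a b => List.Lex (· < ·) a b) :=
  List.IsChain.pairwise (R := (· < ·)) ht.1

theorem pairwise_length_le : (codewords t).Pairwise (fun a b => a.length ≤ b.length) :=
  let R (a b : List Bool) : Prop := a.length ≤ b.length
  have : Trans R R R := ⟨le_trans⟩
  ht.2.pairwise

theorem lex_of_length_lt {A B : List Bool} (hA : A ∈ codewords t) (hB : B ∈ codewords t)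
    (hlt : A.length < B.length) : List.Lex (· < ·) A B := by
  let R (a b : List Bool) : Prop := List.Lex (· < ·) a b ∧ a.length ≤ b.length
  have : Std.Symm (fun a b => R a b ∨ R b a) := ⟨fun _ _ => Or.symm⟩
  have hpw : (codewords t).Pairwise R := ht.pairwise_lex.and ht.pairwise_length_le
  have hsym : (codewords t).Pairwise (fun a b => R a b ∨ R b a) := hpw.imp Or.inl
  rcases hsym.forall hA hB (by rintro rfl; omega) with h | h
  · exact h.1
  · omega

theorem first_lex {ℓ : ℕ} {F C : List Bool} (hF : first t ℓ = some F) (hC : C ∈ codewords t)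
    (hCℓ : C.length = ℓ) (hne : F ≠ C) : List.Lex (· < ·) F C := by
  obtain ⟨rest, hrest⟩ := List.head?_eq_some_iff.mp hF
  have hpw := ht.pairwise_lex.sublist (List.filter_sublist (p := fun C => C.length = ℓ))
  have hC' : C ∈ (codewords t).filter (fun C => C.length = ℓ) := by simp [hC, hCℓ]
  rw [hrest] at hpw hC'
  exact List.rel_of_pairwise_cons hpw ((List.mem_cons.mp hC').resolve_left hne.symm)

end Canonical

end BTree

open BTree in
/-- Decoding by predecessor search: if a bit string `X` of length `ℓ_max`
begins with a codeword `C` of the canonical code, and `F` is the leftmost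
codeword of length `|C|`, then the predecessor of `X` among the right-padded
leftmost per-depth codewords is exactly the padded `F`: padded `F` is at most
`X`, and any other per-depth leftmost codeword whose padded value is at most
that of `X` has padded value at most that of `F`. -/
theorem stmt19 (t : BTree) (ht : Canonical t)
    (X : List Bool) (hX : X.length = lmax t)
    (C : List Bool) (hC : C ∈ codewords t) (hpre : C <+: X)
    (F : List Bool) (hF : first t C.length = some F) :
    padVal (lmax t) F ≤ val X ∧
    ∀ ℓ' : ℕ, ∀ F' : List Bool, first t ℓ' = some F' →
      padVal (lmax t) F' ≤ val X → padVal (lmax t) F' ≤ padVal (lmax t) F := by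
  obtain ⟨hFm, hFl⟩ := mem_codewords_of_first hF
  obtain ⟨R, rfl⟩ := hpre
  have hFC : padVal (lmax t) F ≤ padVal (lmax t) C := by
    rcases eq_or_ne F C with rfl | hne
    · rfl
    · exact (val_append_lt_of_lex_of_mem_codewords hFm hC (ht.first_lex hF hC rfl hne)
        (by rw [length_padded_eq_lmax hFm, length_padded_eq_lmax hC])).le
  have hCX : padVal (lmax t) C ≤ val (C ++ R) := hX ▸ padVal_le_val_append C R
  refine ⟨hFC.trans hCX, fun ℓ' F' hF' hF'X => ?_⟩
  obtain ⟨hF'm, rfl⟩ := mem_codewords_of_first hF'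
  rcases lt_trichotomy F'.length C.length with hlt | heq | hgt
  · exact (val_append_lt_of_lex_of_mem_codewords hF'm hFm
      (ht.lex_of_length_lt hF'm hFm (hFl ▸ hlt))
      (by rw [length_padded_eq_lmax hF'm, length_padded_eq_lmax hFm])).le
  · rw [heq, hF, Option.some_inj] at hF'
    rw [hF']
  · have hXF' := val_append_lt_of_lex_of_mem_codewords hC hF'm (ht.lex_of_length_lt hC hF'm hgt)
      (u := R) (by rw [length_padded_eq_lmax hF'm, hX])
    exact absurd hF'X (not_le.mpr hXF')
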